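/- For λ, ε > 0, the function P₂(x) = λ Σᵢ [ |xᵢ|/ε - log(|xᵢ| + ε) + log ε ] is continuously differentiable on ℝⁿ with a Lipschitz continuous gradient whose Lipschitz modulus is λ/ε². -/

import Mathlib

open Real

/-!
`P₂` is a sum of copies of `φ(t) = λ (|t|/ε - log (|t| + ε) + log ε)` applied to the
coordinates, so its gradient is `φ'` applied coordinatewise, and a coordinatewise map is
`K`-Lipschitz for the Euclidean norm as soon as the scalar map is. Away from `0` one finds
`φ'(t) = λ t / (ε (|t| + ε))` and `φ''(t) = λ / (|t| + ε)²`; both formulas are continuous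
through `0`, hence also hold there, and `φ'' ≤ λ / ε²` gives the Lipschitz modulus.
-/

section Scalar

variable {ε : ℝ}

lemma hasDerivAt_div_abs_add (hε : 0 < ε) (t : ℝ) :
    HasDerivAt (fun s => s / (|s| + ε)) (ε / (|t| + ε) ^ 2) t := by
  have hpos (s : ℝ) : 0 < |s| + ε := by positivity
  refine hasDerivAt_of_hasDerivAt_of_ne' (g := fun t => ε / (|t| + ε) ^ 2) (x := 0)
    (fun y hy => ?_) ?_ ?_ t
  · refine ((hasDerivAt_id y).div ((hasDerivAt_abs hy).add_const ε)
      (hpos y).ne').congr_deriv ?_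
    rw [id, self_mul_sign]
    ring
  · exact (continuous_id.div (continuous_abs.add continuous_const)
      fun s => (hpos s).ne').continuousAt
  · exact (continuous_const.div ((continuous_abs.add continuous_const).pow 2)
      fun s => (pow_pos (hpos s) 2).ne').continuousAt

lemma hasDerivAt_abs_div_sub_log_abs_add (hε : 0 < ε) (t : ℝ) :
    HasDerivAt (fun s => |s| / ε - log (|s| + ε)) (t / (|t| + ε) / ε) t := by
  have hpos (s : ℝ) : 0 < |s| + ε := by positivity
  refine hasDerivAt_of_hasDerivAt_of_ne' (g := fun t => t / (|t| + ε) / ε) (x := 0)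
    (fun y hy => ?_) ?_ ?_ t
  · refine (((hasDerivAt_abs hy).div_const ε).sub
      (((hasDerivAt_abs hy).add_const ε).log (hpos y).ne')).congr_deriv ?_
    field_simp
    rw [add_sub_cancel_right, sign_mul_abs]
  · exact ((continuous_abs.div_const ε).sub
      ((continuous_abs.add continuous_const).log fun s => (hpos s).ne')).continuousAt
  · exact ((continuous_id.div (continuous_abs.add continuous_const)
      fun s => (hpos s).ne').div_const ε).continuousAt

lemma lipschitzWith_mul_div_abs_add_div {lam : ℝ} (hlam : 0 ≤ lam) (hε : 0 < ε) :
    LipschitzWith (lam / ε ^ 2).toNNReal (fun t => lam * (t / (|t| + ε) / ε)) := by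
  have hderiv (t : ℝ) :
      HasDerivAt (fun t => lam * (t / (|t| + ε) / ε)) (lam / (|t| + ε) ^ 2) t := by
    refine (((hasDerivAt_div_abs_add hε t).div_const ε).const_mul lam).congr_deriv ?_
    field_simp
  refine lipschitzWith_of_nnnorm_deriv_le (fun t => (hderiv t).differentiableAt) fun t => ?_
  rw [(hderiv t).deriv, ← NNReal.coe_le_coe, coe_nnnorm, Real.coe_toNNReal _ (by positivity),
    Real.norm_of_nonneg (by positivity)]
  gcongr
  exact le_add_of_nonneg_left (abs_nonneg t)

end Scalar

section EuclideanSpace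

variable {ι : Type*} [Fintype ι]

lemma LipschitzWith.euclideanSpace_map {K : NNReal} {g : ℝ → ℝ} (hg : LipschitzWith K g) :
    LipschitzWith K (fun x : EuclideanSpace ℝ ι => WithLp.toLp 2 fun i => g (x i)) := by
  refine LipschitzWith.of_dist_le_mul fun x y => ?_
  simp only [EuclideanSpace.dist_eq]
  calc √(∑ i, dist (g (x i)) (g (y i)) ^ 2)
      ≤ √(∑ i, (K * dist (x i) (y i)) ^ 2) := by
        gcongr with i
        exact hg.dist_le_mul _ _
    _ = K * √(∑ i, dist (x i) (y i) ^ 2) := by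
        simp_rw [mul_pow, ← Finset.mul_sum]
        rw [Real.sqrt_mul (sq_nonneg _), Real.sqrt_sq K.coe_nonneg]

lemma hasGradientAt_sum_apply {φ φ' : ℝ → ℝ} (x : EuclideanSpace ℝ ι)
    (hφ : ∀ i, HasDerivAt φ (φ' (x i)) (x i)) :
    HasGradientAt (fun y : EuclideanSpace ℝ ι => ∑ i, φ (y i))
      (WithLp.toLp 2 fun i => φ' (x i)) x := by
  rw [hasGradientAt_iff_hasFDerivAt]
  refine (HasFDerivAt.fun_sum fun i _ =>
    (hφ i).hasFDerivAt.comp x (EuclideanSpace.proj (𝕜 := ℝ) i).hasFDerivAt).congr_fderiv ?_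
  ext v
  simp [InnerProductSpace.toDual, PiLp.inner_apply, mul_comm]

end EuclideanSpace

/-- The concave part of the logarithmic regularizer is `C¹` with a Lipschitz
gradient with modulus `λ/ε²`. -/
theorem stmt11 {n : ℕ} (lam ε : ℝ) (hlam : 0 < lam) (hε : 0 < ε)
    (P₂ : EuclideanSpace ℝ (Fin n) → ℝ)
    (hP₂ : ∀ x, P₂ x = lam * ∑ i, (|x i| / ε - Real.log (|x i| + ε) + Real.log ε)) :
    ∃ G : EuclideanSpace ℝ (Fin n) → EuclideanSpace ℝ (Fin n),
      (∀ x, HasGradientAt P₂ (G x) x) ∧ Continuous G ∧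
        LipschitzWith (lam / ε ^ 2).toNNReal G := by
  have hLip := (lipschitzWith_mul_div_abs_add_div hlam.le hε).euclideanSpace_map (ι := Fin n)
  refine ⟨_, fun x => ?_, hLip.continuous, hLip⟩
  have hP : P₂ = fun y => ∑ i, lam * (|y i| / ε - log (|y i| + ε) + log ε) := by
    funext y
    rw [hP₂, Finset.mul_sum]
  rw [hP]
  exact hasGradientAt_sum_apply (φ' := fun t => lam * (t / (|t| + ε) / ε)) x fun i =>
    (((hasDerivAt_abs_div_sub_log_abs_add hε (x i)).add_const (log ε)).const_mul lam)
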